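/- For every λ ≥ 2 log((1+√5)/2) there exists x₀ ∈ [0,1) whose Lyapunov exponent λ(x₀) = lim_{n→∞} (1/n) log|(Tⁿ)'(x₀)| exists and equals λ. -/

import Mathlib

open Filter

/-- The Gauss map `T(x) = 1/x mod 1`, with `T(0) = 0`. -/
noncomputable def gaussMap (x : ℝ) : ℝ := Int.fract (1 / x)

/-- `(Tⁿ)'(x) = ∏_{j=0}^{n-1} T'(Tʲx)` with `T'(y) = −1/y²`. -/
noncomputable def derivTn (x : ℝ) (n : ℕ) : ℝ :=
  ∏ j ∈ Finset.range n, (-(1 / (gaussMap^[j] x) ^ 2))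

/-! The Gauss orbit of `x₀ = [0; d₀, d₁, …]` is `xₖ = [0; dₖ, dₖ₊₁, …]`, so
`log |(Tⁿ)'(x₀)| = ∑_{j<n} 2 log (dⱼ + xⱼ₊₁)`. Along a run of equal digits `b` the tails
converge geometrically to the fixed point `[0; b, b, …]`, hence this sum differs from
`∑_{j<n} 2 log (dⱼ + [0; dⱼ, dⱼ, …])` by `O(1 + number of digit changes before n)`.
Take the digits `1` and a large `A`, the `A`s at the start of the blocks `[K², (K + 1)²)`, so
that they have frequency `β` while the digit changes only `O(√n)` times: the exponent is then
`(1 - β) · 2 log φ + β · 2 log (A + [0; A, A, …])`, which is `λ` for a suitable `β ∈ [0, 1]`. -/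

open Real Finset Asymptotics Topology

noncomputable section

/-- The continued fraction `[0; b, b, b, …]`, the positive fixed point of `y ↦ 1 / (b + y)`. -/
def constCF (b : ℕ) : ℝ := (√((b : ℝ) ^ 2 + 4) - b) / 2

lemma add_constCF (b : ℕ) : b + constCF b = (b + √((b : ℝ) ^ 2 + 4)) / 2 := by
  unfold constCF; ring

lemma constCF_mul_add (b : ℕ) : constCF b * (b + constCF b) = 1 := by
  have h := Real.sq_sqrt (by positivity : (0 : ℝ) ≤ (b : ℝ) ^ 2 + 4)
  rw [add_constCF]; unfold constCF; linear_combination h / 4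

lemma constCF_pos (b : ℕ) : 0 < constCF b := by
  have : √((b : ℝ) ^ 2) < √((b : ℝ) ^ 2 + 4) := Real.sqrt_lt_sqrt (by positivity) (by linarith)
  rw [Real.sqrt_sq (Nat.cast_nonneg b)] at this
  unfold constCF; linarith

lemma constCF_eq_one_div (b : ℕ) : constCF b = 1 / (b + constCF b) := by
  rw [eq_div_iff (by positivity [constCF_pos b]), constCF_mul_add]

lemma constCF_lt_one {b : ℕ} (hb : 1 ≤ b) : constCF b < 1 := by
  have hb' : (1 : ℝ) ≤ b := by exact_mod_cast hb
  rw [constCF_eq_one_div, div_lt_one (by positivity [constCF_pos b])]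
  linarith [constCF_pos b]

/-- The Lyapunov exponent `log |T'(c)| = -2 log c` of the fixed point `c = constCF b` of the
Gauss map. -/
def periodicLyap (b : ℕ) : ℝ := 2 * log (b + constCF b)

lemma periodicLyap_one : periodicLyap 1 = 2 * log goldenRatio := by
  rw [periodicLyap, add_constCF]; norm_num

lemma strictMono_periodicLyap : StrictMono periodicLyap := by
  intro a b hab
  have hab' : (a : ℝ) < b := by exact_mod_cast hab
  have : √((a : ℝ) ^ 2 + 4) < √((b : ℝ) ^ 2 + 4) :=
    Real.sqrt_lt_sqrt (by positivity) (by gcongr)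
  unfold periodicLyap
  gcongr 2 * ?_
  refine log_lt_log (by positivity [constCF_pos a]) ?_
  rw [add_constCF, add_constCF]; linarith

lemma exists_le_periodicLyap (L : ℝ) : ∃ A, 1 < A ∧ L ≤ periodicLyap A := by
  obtain ⟨N, hN⟩ := exists_nat_gt (exp (L / 2))
  refine ⟨N + 2, by omega, ?_⟩
  have hpos : (0 : ℝ) < ((N + 2 : ℕ) : ℝ) + constCF (N + 2) := by
    positivity [constCF_pos (N + 2)]
  have : L / 2 ≤ log (((N + 2 : ℕ) : ℝ) + constCF (N + 2)) := by
    rw [le_log_iff_exp_le hpos]; push_cast; linarith [constCF_pos (N + 2)]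
  unfold periodicLyap; linarith

lemma one_div_le_constCF {A b : ℕ} (hb : 1 ≤ b) (hbA : b ≤ A) :
    1 / ((A : ℝ) + 1) ≤ constCF b := by
  have : (b : ℝ) ≤ A := by exact_mod_cast hbA
  rw [constCF_eq_one_div]
  gcongr
  · positivity [constCF_pos b]
  · linarith [constCF_lt_one hb]

lemma abs_one_div_add_sub_one_div_add_le {b c y z : ℝ} (hb : 1 ≤ b) (hc : 0 ≤ c) (hy : c ≤ y)
    (hz : c ≤ z) : |1 / (b + y) - 1 / (b + z)| ≤ ((1 + c) ^ 2)⁻¹ * |y - z| := by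
  have hprod : (1 + c) ^ 2 ≤ (b + y) * (b + z) := by nlinarith
  have hdiff : 1 / (b + y) - 1 / (b + z) = (z - y) / ((b + y) * (b + z)) := by
    field_simp [show b + y ≠ 0 by linarith, show b + z ≠ 0 by linarith]; ring
  calc |1 / (b + y) - 1 / (b + z)| = |y - z| / ((b + y) * (b + z)) := by
        rw [hdiff, abs_div, abs_of_pos (a := (b + y) * (b + z)) (by nlinarith), abs_sub_comm]
    _ ≤ |y - z| / (1 + c) ^ 2 := by gcongr
    _ = ((1 + c) ^ 2)⁻¹ * |y - z| := by rw [inv_mul_eq_div]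

lemma log_sub_log_le_abs_sub {a b : ℝ} (ha : 0 < a) (hb : 1 ≤ b) : log a - log b ≤ |a - b| :=
  calc log a - log b = log (a / b) := (log_div ha.ne' (by positivity)).symm
    _ ≤ a / b - 1 := log_le_sub_one_of_pos (by positivity)
    _ = (a - b) / b := by field_simp
    _ ≤ |a - b| / b := by gcongr; exact le_abs_self _
    _ ≤ |a - b| := div_le_self (abs_nonneg _) hb

lemma abs_log_sub_log_le {a b : ℝ} (ha : 1 ≤ a) (hb : 1 ≤ b) : |log a - log b| ≤ |a - b| :=
  abs_sub_le_iff.2 ⟨log_sub_log_le_abs_sub (by linarith) hb,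
    abs_sub_comm a b ▸ log_sub_log_le_abs_sub (by linarith) ha⟩

lemma one_sub_mul_sum_range_le {κ : ℝ} {E e : ℕ → ℝ} (h : ∀ j, E j ≤ κ * E (j + 1) + e j)
    (n : ℕ) : (1 - κ) * ∑ j ∈ range n, E j ≤ ∑ j ∈ range n, e j + κ * (E n - E 0) := by
  have hshift : ∑ j ∈ range n, E (j + 1) = ∑ j ∈ range n, E j + (E n - E 0) := by
    linarith [sum_range_succ E n, sum_range_succ' E n]
  have := sum_le_sum fun j (_ : j ∈ range n) => h j
  rw [sum_add_distrib, ← mul_sum, hshift] at this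
  linarith

lemma isLittleO_one_natCast : (fun _ : ℕ => (1 : ℝ)) =o[atTop] (fun n : ℕ => (n : ℝ)) :=
  (isLittleO_one_left_iff ℝ).2 (tendsto_norm_atTop_atTop.comp tendsto_natCast_atTop_atTop)

lemma isLittleO_natSqrt_add_one :
    (fun n : ℕ => (Nat.sqrt n : ℝ) + 1) =o[atTop] (fun n : ℕ => (n : ℝ)) := by
  have hsqrt : Tendsto (fun n : ℕ => (Nat.sqrt n : ℝ)) atTop atTop :=
    tendsto_natCast_atTop_atTop.comp (tendsto_atTop_atTop_of_monotone
      (fun _ _ => Nat.sqrt_le_sqrt) fun K => ⟨K ^ 2, (Nat.sqrt_eq' K).ge⟩)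
  have hsq : (fun n : ℕ => (Nat.sqrt n : ℝ) ^ 2) =O[atTop] (fun n : ℕ => (n : ℝ)) :=
    IsBigO.of_bound 1 (Eventually.of_forall fun n => by
      rw [norm_of_nonneg (by positivity), norm_of_nonneg (by positivity), one_mul]
      exact_mod_cast Nat.sqrt_le' n)
  have hlin : (fun n : ℕ => (Nat.sqrt n : ℝ)) =o[atTop] (fun n : ℕ => (n : ℝ)) := by
    refine (((isLittleO_pow_pow_atTop_of_lt (𝕜 := ℝ) one_lt_two).comp_tendsto hsqrt).trans_isBigO
      hsq).congr_left fun n => ?_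
    simp
  exact hlin.add isLittleO_one_natCast

lemma exists_gaussMap_iterate_natCast_div_eq_zero (p q : ℕ) :
    ∃ n, gaussMap^[n] ((p : ℝ) / q) = 0 := by
  induction p using Nat.strong_induction_on generalizing q with
  | _ p ih =>
    rcases Nat.eq_zero_or_pos p with rfl | hp
    · exact ⟨0, by simp⟩
    · have hstep : gaussMap ((p : ℝ) / q) = ((q % p : ℕ) : ℝ) / p := by
        rw [gaussMap, one_div_div, Int.fract_div_natCast_eq_div_natCast_mod]
      obtain ⟨n, hn⟩ := ih (q % p) (Nat.mod_lt q hp) p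
      exact ⟨n + 1, by rw [Function.iterate_succ_apply, hstep, hn]⟩

def numChanges {α : Type*} [DecidableEq α] (d : ℕ → α) (n : ℕ) : ℕ :=
  #{j ∈ range n | d j ≠ d (j + 1)}

/-- `x k = [0; d k, d (k + 1), …]`: the Gauss orbit of the continued fraction with digits `d`.
-/
structure IsCFTails (d : ℕ → ℕ) (x : ℕ → ℝ) : Prop where
  pos : ∀ k, 0 < x k
  eq_one_div : ∀ k, x k = 1 / (d k + x (k + 1))

/-- The contraction factor of `y ↦ 1 / (b + y)` on `[1 / (A + 1), 1]`. -/
def tailContraction (A : ℕ) : ℝ := ((1 + 1 / ((A : ℝ) + 1)) ^ 2)⁻¹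

lemma tailContraction_nonneg (A : ℕ) : 0 ≤ tailContraction A := by
  unfold tailContraction; positivity

lemma tailContraction_lt_one (A : ℕ) : tailContraction A < 1 := by
  unfold tailContraction
  exact inv_lt_one_of_one_lt₀ (one_lt_pow₀ (lt_add_of_pos_right _ (by positivity)) two_ne_zero)

namespace IsCFTails

variable {d : ℕ → ℕ} {x : ℕ → ℝ} {A : ℕ}

lemma one_div_eq (hx : IsCFTails d x) (k : ℕ) : 1 / x k = d k + x (k + 1) := by
  rw [hx.eq_one_div k, one_div_one_div]

lemma lt_one (hx : IsCFTails d x) (hd : ∀ k, 1 ≤ d k) (k : ℕ) : x k < 1 := by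
  have : (1 : ℝ) ≤ d k := by exact_mod_cast hd k
  rw [hx.eq_one_div k, div_lt_one (by linarith [hx.pos (k + 1)])]
  linarith [hx.pos (k + 1)]

lemma one_div_le (hx : IsCFTails d x) (hd : ∀ k, 1 ≤ d k) (hdA : ∀ k, d k ≤ A) (k : ℕ) :
    1 / ((A : ℝ) + 1) ≤ x k := by
  have : (d k : ℝ) ≤ A := by exact_mod_cast hdA k
  rw [hx.eq_one_div k]
  gcongr
  · linarith [hx.pos (k + 1)]
  · linarith [hx.lt_one hd (k + 1)]

lemma gaussMap_eq (hx : IsCFTails d x) (hd : ∀ k, 1 ≤ d k) (k : ℕ) :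
    gaussMap (x k) = x (k + 1) := by
  rw [gaussMap, hx.one_div_eq, Int.fract_natCast_add,
    Int.fract_eq_self.2 ⟨(hx.pos _).le, hx.lt_one hd _⟩]

lemma gaussMap_iterate (hx : IsCFTails d x) (hd : ∀ k, 1 ≤ d k) (j : ℕ) :
    gaussMap^[j] (x 0) = x j := by
  induction j with
  | zero => rfl
  | succ j ih => rw [Function.iterate_succ_apply', ih, hx.gaussMap_eq hd]

lemma irrational (hx : IsCFTails d x) (hd : ∀ k, 1 ≤ d k) :
    Irrational (x 0) := by
  rintro ⟨q, hq⟩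
  have hq0 : 0 ≤ q := by exact_mod_cast hq ▸ (hx.pos 0).le
  have hnum : ((q.num.natAbs : ℕ) : ℝ) = q.num := by
    rw [Nat.cast_natAbs, Int.cast_abs, abs_of_nonneg (by exact_mod_cast Rat.num_nonneg.2 hq0)]
  obtain ⟨n, hn⟩ := exists_gaussMap_iterate_natCast_div_eq_zero q.num.natAbs q.den
  rw [hnum, ← Rat.cast_def, hq, hx.gaussMap_iterate hd] at hn
  exact (hx.pos n).ne' hn

lemma log_abs_derivTn (hx : IsCFTails d x) (hd : ∀ k, 1 ≤ d k) (n : ℕ) :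
    log |derivTn (x 0) n| = ∑ j ∈ range n, 2 * log (d j + x (j + 1)) := by
  have hpos : ∀ j, 0 < (d j : ℝ) + x (j + 1) := fun j => by positivity [hx.pos (j + 1)]
  have hterm : ∀ j, |-(1 / (gaussMap^[j] (x 0)) ^ 2)| = (d j + x (j + 1)) ^ 2 := fun j => by
    rw [hx.gaussMap_iterate hd, abs_neg, ← one_div_pow, hx.one_div_eq, abs_of_pos (by
      positivity [hpos j])]
  rw [derivTn, abs_prod, log_prod fun j _ => by rw [hterm]; positivity [hpos j]]
  exact sum_congr rfl fun j _ => by rw [hterm, log_pow]; push_cast; ring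

lemma abs_sub_constCF_le_of_eq (hx : IsCFTails d x) (hd : ∀ k, 1 ≤ d k) (hdA : ∀ k, d k ≤ A)
    {j : ℕ} (h : d j = d (j + 1)) :
    |x (j + 1) - constCF (d j)| ≤ tailContraction A * |x (j + 2) - constCF (d (j + 1))| := by
  rw [hx.eq_one_div (j + 1), constCF_eq_one_div, h]
  exact abs_one_div_add_sub_one_div_add_le (by exact_mod_cast hd _) (by positivity)
    (hx.one_div_le hd hdA _) (one_div_le_constCF (hd _) (hdA _))

lemma one_sub_mul_sum_abs_sub_constCF_le (hx : IsCFTails d x) (hd : ∀ k, 1 ≤ d k)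
    (hdA : ∀ k, d k ≤ A) (n : ℕ) :
    (1 - tailContraction A) * ∑ j ∈ range n, |x (j + 1) - constCF (d j)| ≤ numChanges d n + 1 := by
  set E : ℕ → ℝ := fun j => |x (j + 1) - constCF (d j)|
  have hκ := tailContraction_nonneg A
  have hE1 : ∀ j, E j ≤ 1 := fun j => abs_sub_le_iff.2
    ⟨by linarith [hx.lt_one hd (j + 1), constCF_pos (d j)],
      by linarith [hx.pos (j + 1), constCF_lt_one (hd j)]⟩
  have hstep : ∀ j, E j ≤ tailContraction A * E (j + 1) + if d j ≠ d (j + 1) then 1 else 0 := by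
    intro j
    by_cases h : d j = d (j + 1)
    · rw [if_neg (not_not.2 h), add_zero]
      exact hx.abs_sub_constCF_le_of_eq hd hdA h
    · rw [if_pos h]
      exact le_add_of_nonneg_of_le (mul_nonneg hκ (abs_nonneg _)) (hE1 j)
  have hends : tailContraction A * (E n - E 0) ≤ 1 := by
    nlinarith [hE1 n, abs_nonneg (x 1 - constCF (d 0)), tailContraction_lt_one A]
  have := one_sub_mul_sum_range_le hstep n
  rw [sum_boole] at this
  exact this.trans (by unfold numChanges; linarith)

lemma abs_log_abs_derivTn_sub_sum_le (hx : IsCFTails d x) (hd : ∀ k, 1 ≤ d k)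
    (hdA : ∀ k, d k ≤ A) (n : ℕ) :
    |log |derivTn (x 0) n| - ∑ j ∈ range n, periodicLyap (d j)|
      ≤ 2 / (1 - tailContraction A) * (numChanges d n + 1) := by
  have hκ := tailContraction_lt_one A
  have hterm : ∀ j, |2 * log (d j + x (j + 1)) - periodicLyap (d j)|
      ≤ 2 * |x (j + 1) - constCF (d j)| := fun j => by
    have : (1 : ℝ) ≤ d j := by exact_mod_cast hd j
    rw [periodicLyap, ← mul_sub, abs_mul, abs_two]
    gcongr 2 * ?_
    refine (abs_log_sub_log_le ?_ ?_).trans_eq (by rw [add_sub_add_left_eq_sub])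
    · linarith [hx.pos (j + 1)]
    · linarith [constCF_pos (d j)]
  rw [hx.log_abs_derivTn hd, ← sum_sub_distrib, div_mul_eq_mul_div, le_div_iff₀ (by linarith)]
  calc |∑ j ∈ range n, (2 * log (d j + x (j + 1)) - periodicLyap (d j))| * (1 - tailContraction A)
      ≤ (∑ j ∈ range n, 2 * |x (j + 1) - constCF (d j)|) * (1 - tailContraction A) := by
        refine mul_le_mul_of_nonneg_right ?_ (by linarith)
        exact (abs_sum_le_sum_abs _ _).trans (sum_le_sum fun j _ => hterm j)
    _ ≤ 2 * (numChanges d n + 1) := by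
        rw [← mul_sum, mul_assoc, mul_comm (∑ j ∈ range n, _)]
        gcongr
        exact hx.one_sub_mul_sum_abs_sub_constCF_le hd hdA n

theorem tendsto_lyapunov {L : ℝ} (hx : IsCFTails d x)
    (hd : ∀ k, 1 ≤ d k) (hdA : ∀ k, d k ≤ A)
    (hchg : (fun n => (numChanges d n : ℝ)) =o[atTop] (fun n => (n : ℝ)))
    (havg : Tendsto (fun n : ℕ => 1 / (n : ℝ) * ∑ j ∈ range n, periodicLyap (d j)) atTop (𝓝 L)) :
    Tendsto (fun n : ℕ => 1 / (n : ℝ) * log |derivTn (x 0) n|) atTop (𝓝 L) := by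
  have herr : (fun n => log |derivTn (x 0) n| - ∑ j ∈ range n, periodicLyap (d j))
      =o[atTop] (fun n => (n : ℝ)) := by
    refine IsBigO.trans_isLittleO ?_ (hchg.add isLittleO_one_natCast)
    refine IsBigO.of_bound (2 / (1 - tailContraction A)) (Eventually.of_forall fun n => ?_)
    rw [norm_eq_abs, norm_of_nonneg (by positivity)]
    exact hx.abs_log_abs_derivTn_sub_sum_le hd hdA n
  simpa only [add_zero] using (havg.add herr.tendsto_div_nhds_zero).congr fun n => by ring

end IsCFTails

def cfApprox (d : ℕ → ℕ) : ℕ → ℕ → ℝ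
  | 0, _ => 1
  | m + 1, k => 1 / (d k + cfApprox d m (k + 1))

section cfApprox

variable {d : ℕ → ℕ} {A : ℕ}

lemma cfApprox_mem (hd : ∀ k, 1 ≤ d k) (hdA : ∀ k, d k ≤ A) (m k : ℕ) :
    cfApprox d m k ∈ Set.Icc (1 / ((A : ℝ) + 1)) 1 := by
  induction m generalizing k with
  | zero => exact ⟨div_le_one_of_le₀ (by linarith [(Nat.cast_nonneg A : (0 : ℝ) ≤ A)])
      (by positivity), le_rfl⟩
  | succ m ih =>
    obtain ⟨h1, h2⟩ := ih (k + 1)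
    have hd1 : (1 : ℝ) ≤ d k := by exact_mod_cast hd k
    have hdA' : (d k : ℝ) ≤ A := by exact_mod_cast hdA k
    have hc : (0 : ℝ) < 1 / ((A : ℝ) + 1) := by positivity
    rw [cfApprox]
    exact ⟨by gcongr; linarith, by rw [div_le_one (by linarith)]; linarith⟩

lemma abs_cfApprox_succ_sub_le (hd : ∀ k, 1 ≤ d k) (hdA : ∀ k, d k ≤ A) (m k : ℕ) :
    |cfApprox d (m + 1) k - cfApprox d m k| ≤ tailContraction A ^ m := by
  induction m generalizing k with
  | zero =>
    obtain ⟨h1, h1'⟩ := cfApprox_mem hd hdA 1 k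
    obtain ⟨h0, h0'⟩ := cfApprox_mem hd hdA 0 k
    have : (0 : ℝ) < 1 / ((A : ℝ) + 1) := by positivity
    rw [pow_zero, abs_sub_le_iff]
    constructor <;> linarith
  | succ m ih =>
    calc |cfApprox d (m + 2) k - cfApprox d (m + 1) k|
        ≤ tailContraction A * |cfApprox d (m + 1) (k + 1) - cfApprox d m (k + 1)| :=
          abs_one_div_add_sub_one_div_add_le (by exact_mod_cast hd k) (by positivity)
            (cfApprox_mem hd hdA _ _).1 (cfApprox_mem hd hdA _ _).1
      _ ≤ tailContraction A * tailContraction A ^ m := by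
          gcongr
          · exact tailContraction_nonneg A
          · exact ih (k + 1)
      _ = tailContraction A ^ (m + 1) := (pow_succ' _ _).symm

theorem exists_isCFTails (hd : ∀ k, 1 ≤ d k) (hdA : ∀ k, d k ≤ A) : ∃ x, IsCFTails d x := by
  have hcauchy (k : ℕ) : CauchySeq fun m => cfApprox d m k :=
    cauchySeq_of_le_geometric _ 1 (tailContraction_lt_one A) fun m => by
      rw [dist_comm, Real.dist_eq, one_mul]
      exact abs_cfApprox_succ_sub_le hd hdA m k
  choose x hx using fun k => cauchySeq_tendsto_of_complete (hcauchy k)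
  have hpos (k : ℕ) : 0 < x k :=
    (by positivity : (0 : ℝ) < 1 / ((A : ℝ) + 1)).trans_le
      (ge_of_tendsto' (hx k) fun m => (cfApprox_mem hd hdA m k).1)
  refine ⟨x, hpos, fun k => tendsto_nhds_unique ((hx k).comp (tendsto_add_atTop_nat 1)) ?_⟩
  exact tendsto_const_nhds.div (tendsto_const_nhds.add (hx (k + 1)))
    (by positivity [hpos (k + 1)])

end cfApprox

/-- Marking the first `blockLen β K` entries of each block `[K², (K + 1)²)` marks exactly
`⌊β K²⌋` of the integers below `K²`. -/
def blockLen (β : ℝ) (K : ℕ) : ℕ := ⌊β * ((K : ℝ) + 1) ^ 2⌋₊ - ⌊β * (K : ℝ) ^ 2⌋₊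

def IsMarked (β : ℝ) (j : ℕ) : Prop := j - Nat.sqrt j ^ 2 < blockLen β (Nat.sqrt j)

instance (β : ℝ) : DecidablePred (IsMarked β) := fun _ => Nat.decLt _ _

section blocks

variable {β : ℝ}

lemma floor_add_blockLen (hβ : 0 ≤ β) (K : ℕ) :
    ⌊β * (K : ℝ) ^ 2⌋₊ + blockLen β K = ⌊β * ((K : ℝ) + 1) ^ 2⌋₊ := by
  have : ⌊β * (K : ℝ) ^ 2⌋₊ ≤ ⌊β * ((K : ℝ) + 1) ^ 2⌋₊ :=
    Nat.floor_le_floor (by gcongr; linarith)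
  unfold blockLen; omega

lemma blockLen_le (hβ : β ∈ Set.Icc 0 1) (K : ℕ) : blockLen β K ≤ 2 * K + 1 := by
  have hle : β * ((K : ℝ) + 1) ^ 2 ≤ β * (K : ℝ) ^ 2 + ((2 * K + 1 : ℕ) : ℝ) := by
    push_cast; nlinarith [hβ.1, hβ.2]
  have := (Nat.floor_le_floor hle).trans_eq (Nat.floor_add_natCast (by positivity [hβ.1]) _)
  unfold blockLen; omega

lemma isMarked_sq_add_iff {K k : ℕ} (hk : k ≤ 2 * K) :
    IsMarked β (K ^ 2 + k) ↔ k < blockLen β K := by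
  rw [IsMarked, Nat.sqrt_add_eq' K (by omega), Nat.add_sub_cancel_left]

lemma count_isMarked_sq (hβ : β ∈ Set.Icc 0 1) (K : ℕ) :
    Nat.count (IsMarked β) (K ^ 2) = ⌊β * (K : ℝ) ^ 2⌋₊ := by
  induction K with
  | zero => simp
  | succ K ih =>
    have hblock : Nat.count (fun k => IsMarked β (K ^ 2 + k)) (2 * K + 1) = blockLen β K := by
      rw [Nat.count_eq_card_filter_range,
        filter_congr fun k hk => isMarked_sq_add_iff (by have := mem_range.1 hk; omega)]
      have := blockLen_le hβ K
      rw [show {k ∈ range (2 * K + 1) | k < blockLen β K} = range (blockLen β K) by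
        ext; simp only [mem_filter, mem_range]; omega, card_range]
    rw [show (K + 1) ^ 2 = K ^ 2 + (2 * K + 1) by ring, Nat.count_add, ih, hblock,
      floor_add_blockLen hβ.1]
    push_cast; rfl

lemma abs_count_isMarked_sub_le (hβ : β ∈ Set.Icc 0 1) (n : ℕ) :
    |(Nat.count (IsMarked β) n : ℝ) - β * n| ≤ 2 * (Nat.sqrt n + 1) := by
  have h1 := Nat.sqrt_le' n
  have h2 : n < (Nat.sqrt n + 1) ^ 2 := Nat.lt_succ_sqrt' n
  generalize Nat.sqrt n = K at h1 h2 ⊢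
  obtain ⟨r, rfl⟩ : ∃ r, n = K ^ 2 + r := ⟨n - K ^ 2, by omega⟩
  have hr : (r : ℝ) ≤ 2 * K := by
    have : (K + 1) ^ 2 = K ^ 2 + 2 * K + 1 := by ring
    exact_mod_cast (by omega : r ≤ 2 * K)
  have hcount : (Nat.count (fun k => IsMarked β (K ^ 2 + k)) r : ℝ) ≤ r := by
    exact_mod_cast Nat.count_le _
  have hcount0 : (0 : ℝ) ≤ Nat.count (fun k => IsMarked β (K ^ 2 + k)) r := Nat.cast_nonneg _
  have hfloor := Nat.floor_le (by positivity [hβ.1] : 0 ≤ β * (K : ℝ) ^ 2)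
  have hfloor' := Nat.lt_floor_add_one (β * (K : ℝ) ^ 2)
  rw [Nat.count_add, count_isMarked_sq hβ]
  push_cast
  rw [abs_le]
  constructor <;> nlinarith [hβ.1, hβ.2]

lemma eq_sq_or_eq_sq_add_blockLen_of_not_iff {j : ℕ}
    (h : ¬(IsMarked β j ↔ IsMarked β (j + 1))) :
    j + 1 = Nat.sqrt (j + 1) ^ 2 ∨
      j + 1 = Nat.sqrt (j + 1) ^ 2 + blockLen β (Nat.sqrt (j + 1)) := by
  have h1 := Nat.sqrt_le' (j + 1)
  have h2 : j + 1 < (Nat.sqrt (j + 1) + 1) ^ 2 := Nat.lt_succ_sqrt' (j + 1)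
  generalize Nat.sqrt (j + 1) = K at h1 h2 ⊢
  have : (K + 1) ^ 2 = K ^ 2 + 2 * K + 1 := by ring
  rcases (show j + 1 = K ^ 2 ∨ K ^ 2 ≤ j by omega) with hj | hj
  · exact Or.inl hj
  · obtain ⟨k, rfl⟩ := Nat.exists_eq_add_of_le hj
    rw [isMarked_sq_add_iff (by omega), add_assoc, isMarked_sq_add_iff (by omega)] at h
    omega

end blocks

lemma numChanges_ite_isMarked_le (β : ℝ) (a b n : ℕ) :
    numChanges (fun j => if IsMarked β j then b else a) n ≤ 2 * (Nat.sqrt n + 1) := by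
  set s := Nat.sqrt n + 1
  have hsub :
      {j ∈ range n | (if IsMarked β j then b else a) ≠ if IsMarked β (j + 1) then b else a} ⊆
        (range s).image (fun K => K ^ 2 - 1) ∪
          (range s).image (fun K => K ^ 2 + blockLen β K - 1) := by
    intro j hj
    rw [mem_filter, mem_range] at hj
    have hK : Nat.sqrt (j + 1) ∈ range s :=
      mem_range.2 (Nat.lt_succ_of_le (Nat.sqrt_le_sqrt hj.1))
    have hne : ¬(IsMarked β j ↔ IsMarked β (j + 1)) := fun h => hj.2 (by simp only [h])
    rcases eq_sq_or_eq_sq_add_blockLen_of_not_iff hne with h | h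
    · exact mem_union_left _ (mem_image.2 ⟨_, hK, by omega⟩)
    · exact mem_union_right _ (mem_image.2 ⟨_, hK, by omega⟩)
  calc numChanges _ n ≤ _ := card_le_card hsub
    _ ≤ s + s := (card_union_le _ _).trans (add_le_add (card_image_le.trans_eq (card_range s))
        (card_image_le.trans_eq (card_range s)))
    _ = 2 * s := (two_mul s).symm

lemma isLittleO_numChanges_ite_isMarked (β : ℝ) (a b : ℕ) :
    (fun n => (numChanges (fun j => if IsMarked β j then b else a) n : ℝ))
      =o[atTop] (fun n : ℕ => (n : ℝ)) := by
  refine IsBigO.trans_isLittleO ?_ isLittleO_natSqrt_add_one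
  refine IsBigO.of_bound 2 (Eventually.of_forall fun n => ?_)
  rw [norm_of_nonneg (by positivity), norm_of_nonneg (by positivity)]
  exact_mod_cast numChanges_ite_isMarked_le β a b n

lemma tendsto_count_isMarked_div {β : ℝ} (hβ : β ∈ Set.Icc 0 1) :
    Tendsto (fun n : ℕ => (Nat.count (IsMarked β) n : ℝ) / n) atTop (𝓝 β) := by
  have : (fun n : ℕ => (Nat.count (IsMarked β) n : ℝ) - β * n)
      =o[atTop] (fun n : ℕ => (n : ℝ)) :=
    (IsBigO.of_bound 2 (Eventually.of_forall fun n => by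
      rw [norm_eq_abs, norm_of_nonneg (by positivity)]
      exact abs_count_isMarked_sub_le hβ n)).trans_isLittleO isLittleO_natSqrt_add_one
  have hlim := this.tendsto_div_nhds_zero.add_const β
  rw [zero_add] at hlim
  refine hlim.congr' ((eventually_ne_atTop 0).mono fun n hn => ?_)
  field_simp
  ring

theorem tendsto_average_ite_isMarked {β : ℝ} (hβ : β ∈ Set.Icc 0 1) (f : ℕ → ℝ) (a b : ℕ) :
    Tendsto (fun n : ℕ => 1 / (n : ℝ) * ∑ j ∈ range n, f (if IsMarked β j then b else a)) atTop
      (𝓝 ((1 - β) * f a + β * f b)) := by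
  have hsum (n : ℕ) : ∑ j ∈ range n, f (if IsMarked β j then b else a)
      = Nat.count (IsMarked β) n * f b + (n - Nat.count (IsMarked β) n) * f a := by
    have hcard : (#{j ∈ range n | ¬IsMarked β j} : ℝ) = n - Nat.count (IsMarked β) n := by
      rw [Nat.count_eq_card_filter_range, eq_sub_iff_add_eq', ← Nat.cast_add,
        card_filter_add_card_filter_not, card_range]
    simp_rw [apply_ite f]
    rw [sum_ite, sum_const, sum_const, nsmul_eq_mul, nsmul_eq_mul, hcard,
      Nat.count_eq_card_filter_range]
  have hfreq := tendsto_count_isMarked_div hβ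
  refine (((hfreq.const_sub 1).mul_const (f a)).add (hfreq.mul_const (f b))).congr' ?_
  filter_upwards [eventually_ne_atTop 0] with n hn
  rw [hsum]; field_simp; ring

/-- Every `λ ≥ 2log((1+√5)/2)` is attained as the Lyapunov exponent
`λ(x₀) = lim (1/n) log|(Tⁿ)'(x₀)|` of some `x₀ ∈ [0,1)`. -/
theorem lyapunov_exponent_attained (lam : ℝ)
    (hlam : 2 * Real.log ((1 + Real.sqrt 5) / 2) ≤ lam) :
    ∃ x₀ : ℝ, x₀ ∈ Set.Ico (0 : ℝ) 1 ∧ Irrational x₀ ∧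
      Tendsto (fun n : ℕ => (1 / (n : ℝ)) * Real.log |derivTn x₀ n|)
        atTop (nhds lam) := by
  obtain ⟨A, hA, hlamA⟩ := exists_le_periodicLyap lam
  have hgap : periodicLyap 1 < periodicLyap A := strictMono_periodicLyap hA
  set β := (lam - periodicLyap 1) / (periodicLyap A - periodicLyap 1)
  have hβ : β ∈ Set.Icc 0 1 := ⟨div_nonneg (by rw [periodicLyap_one]; linarith) (by linarith),
    (div_le_one (by linarith)).2 (by linarith)⟩
  set d : ℕ → ℕ := fun j => if IsMarked β j then A else 1
  have hd (j : ℕ) : 1 ≤ d j := by simp only [d]; split_ifs <;> omega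
  have hdA (j : ℕ) : d j ≤ A := by simp only [d]; split_ifs <;> omega
  obtain ⟨x, hx⟩ := exists_isCFTails hd hdA
  refine ⟨x 0, ⟨(hx.pos 0).le, hx.lt_one hd 0⟩, hx.irrational hd,
    hx.tendsto_lyapunov hd hdA (isLittleO_numChanges_ite_isMarked β 1 A) ?_⟩
  convert tendsto_average_ite_isMarked hβ periodicLyap 1 A using 2
  have : periodicLyap A - periodicLyap 1 ≠ 0 := (sub_pos.2 hgap).ne'
  simp only [β]
  field_simp
  ring

end
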